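/- Let N ≥ 1 and let Y be an N×N real matrix all of whose entries are strictly positive. Define the column-normalization map by (colNorm Y)_{ij} = Y_{ij} / (Σ_{i'} Y_{i'j}) and the row-normalization map by (rowNorm Y)_{ij} = Y_{ij} / (Σ_{j'} Y_{ij'}). Define the sequence Y⁽⁰⁾ = Y, Y⁽²ˡ⁺¹⁾ = colNorm(Y⁽²ˡ⁾), Y⁽²ˡ⁺²⁾ = rowNorm(Y⁽²ˡ⁺¹⁾). Then the sequence Y⁽ᵏ⁾ converges entrywise as k → ∞ to the unique doubly stochastic matrix of the form D₁ · Y · D₂ with D₁, D₂ diagonal matrices having strictly positive diagonal entries. -/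

import Mathlib

/-!
Write `spread r = max r / min r - 1` for a positive vector `r`; `spread (u / v)` measures how far
`u` and `v` are from being proportional (it is `exp` of Hilbert's projective distance, minus one).
A matrix with entries in `[m, M]`, `0 < m`, contracts it by the factor `1 - m / M`, while
inverting both vectors merely exchanges them. Hence one Sinkhorn sweep, read on row scalings as
`x ↦ (Y *ᵥ (x ᵥ* Y)⁻¹)⁻¹`, contracts it by `(1 - m / M)²`. Since `x / sinkhornStep Y x` always
has average `1`, its logarithm is bounded by its spread, so the logarithms of the iterates form a
geometrically Cauchy sequence: the row scalings converge to a fixed point `w`, and the Sinkhorn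
matrices, continuous functions of consecutive iterates, converge to
`diagonal w * Y * diagonal (w ᵥ* Y)⁻¹`. Fixed points are exactly the row scalings of the doubly
stochastic scalings of `Y`, and the contraction makes them unique up to a scalar factor.
-/

open Filter Topology

/-- An `N × N` real matrix is doubly stochastic if all its entries are non-negative
and every row sum and every column sum equals 1. -/
def IsDoublyStochastic {N : ℕ} (B : Matrix (Fin N) (Fin N) ℝ) : Prop :=
  (∀ i j, 0 ≤ B i j) ∧ (∀ i, ∑ j, B i j = 1) ∧ (∀ j, ∑ i, B i j = 1)

/-- Column normalization: each column is rescaled so that its sum is 1. -/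
noncomputable def colNorm {N : ℕ} (Y : Matrix (Fin N) (Fin N) ℝ) : Matrix (Fin N) (Fin N) ℝ :=
  Matrix.of fun i j => Y i j / ∑ i', Y i' j

/-- Row normalization: each row is rescaled so that its sum is 1. -/
noncomputable def rowNorm {N : ℕ} (Y : Matrix (Fin N) (Fin N) ℝ) : Matrix (Fin N) (Fin N) ℝ :=
  Matrix.of fun i j => Y i j / ∑ j', Y i j'

/-- The Sinkhorn iteration: `Y⁽⁰⁾ = Y`, `Y⁽²ˡ⁺¹⁾ = colNorm Y⁽²ˡ⁾`,
`Y⁽²ˡ⁺²⁾ = rowNorm Y⁽²ˡ⁺¹⁾`. -/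
noncomputable def sinkSeq {N : ℕ} (Y : Matrix (Fin N) (Fin N) ℝ) : ℕ → Matrix (Fin N) (Fin N) ℝ
  | 0 => Y
  | (k + 1) => if k % 2 = 0 then colNorm (sinkSeq Y k) else rowNorm (sinkSeq Y k)

open Finset Matrix Function

section Spread

variable {ι : Type*} [Fintype ι] [Nonempty ι]

noncomputable def spread (r : ι → ℝ) : ℝ :=
  univ.sup' univ_nonempty r / univ.inf' univ_nonempty r - 1

lemma inf'_pos {r : ι → ℝ} (hr : ∀ i, 0 < r i) : 0 < univ.inf' univ_nonempty r :=
  (lt_inf'_iff _).2 fun i _ => hr i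

lemma spread_nonneg {r : ι → ℝ} (hr : ∀ i, 0 < r i) : 0 ≤ spread r := by
  obtain ⟨i⟩ := ‹Nonempty ι›
  rw [spread, sub_nonneg, one_le_div (inf'_pos hr)]
  exact (inf'_le r (mem_univ i)).trans (le_sup' r (mem_univ i))

lemma spread_le {r : ι → ℝ} {A B : ℝ} (hA : 0 < A) (hAr : ∀ i, A ≤ r i) (hrB : ∀ i, r i ≤ B) :
    spread r ≤ B / A - 1 := by
  obtain ⟨i⟩ := ‹Nonempty ι›
  have hinf : A ≤ univ.inf' univ_nonempty r := (le_inf'_iff _ _).2 fun i _ => hAr i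
  have hsup : univ.sup' univ_nonempty r ≤ B := (sup'_le_iff _ _).2 fun i _ => hrB i
  rw [spread, sub_le_sub_iff_right]
  exact div_le_div₀ (hA.le.trans ((hAr i).trans (hrB i))) hsup hA hinf

lemma exists_eq_const_of_spread_nonpos {r : ι → ℝ} (hr : ∀ i, 0 < r i) (h : spread r ≤ 0) :
    ∃ t, ∀ i, r i = t := by
  have hinf := inf'_pos hr
  have hsup : univ.sup' univ_nonempty r ≤ univ.inf' univ_nonempty r := by
    rwa [spread, sub_nonpos, div_le_one hinf] at h
  exact ⟨_, fun i => le_antisymm ((le_sup' r (mem_univ i)).trans hsup) (inf'_le r (mem_univ i))⟩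

/-- `min r ≤ 1 ≤ max r`, so `|log r i| ≤ log (max r / min r) ≤ max r / min r - 1`. -/
lemma abs_log_le_spread {r : ι → ℝ} (hr : ∀ i, 0 < r i) (hsum : ∑ i, r i = Fintype.card ι)
    (i : ι) : |Real.log (r i)| ≤ spread r := by
  set a := univ.inf' univ_nonempty r
  set b := univ.sup' univ_nonempty r
  have ha : 0 < a := inf'_pos hr
  have hai : a ≤ r i := inf'_le r (mem_univ i)
  have hib : r i ≤ b := le_sup' r (mem_univ i)
  have hcard : (0 : ℝ) < Fintype.card ι := by exact_mod_cast Fintype.card_pos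
  have ha1 : a ≤ 1 := by
    have := card_nsmul_le_sum univ r a fun j _ => inf'_le r (mem_univ j)
    rw [hsum, card_univ, nsmul_eq_mul] at this
    exact (mul_le_iff_le_one_right hcard).1 this
  have hb1 : 1 ≤ b := by
    have := sum_le_card_nsmul univ r b fun j _ => le_sup' r (mem_univ j)
    rw [hsum, card_univ, nsmul_eq_mul] at this
    exact (le_mul_iff_one_le_right hcard).1 this
  have hlog_a : Real.log a ≤ 0 := Real.log_nonpos ha.le ha1
  have hlog_b : 0 ≤ Real.log b := Real.log_nonneg hb1
  have hlog_ai : Real.log a ≤ Real.log (r i) := Real.log_le_log ha hai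
  have hlog_ib : Real.log (r i) ≤ Real.log b := Real.log_le_log (hr i) hib
  calc |Real.log (r i)| ≤ Real.log b - Real.log a := abs_le.2 ⟨by linarith, by linarith⟩
    _ = Real.log (b / a) := (Real.log_div (by linarith) ha.ne').symm
    _ ≤ spread r := Real.log_le_sub_one_of_pos (by positivity)

end Spread

section Contraction

variable {κ ι : Type*} [Fintype ι] [Nonempty ι]

lemma mulVec_pos {Y : Matrix κ ι ℝ} (hY : ∀ i j, 0 < Y i j) {x : ι → ℝ} (hx : ∀ j, 0 < x j)
    (i : κ) : 0 < (Y *ᵥ x) i :=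
  sum_pos (fun j _ => mul_pos (hY i j) (hx j)) univ_nonempty

lemma vecMul_pos {Y : Matrix ι κ ℝ} (hY : ∀ i j, 0 < Y i j) {x : ι → ℝ} (hx : ∀ i, 0 < x i)
    (j : κ) : 0 < (x ᵥ* Y) j :=
  sum_pos (fun i _ => mul_pos (hx i) (hY i j)) univ_nonempty

lemma inv_vecMul_pos {Y : Matrix ι κ ℝ} (hY : ∀ i j, 0 < Y i j) {x : ι → ℝ} (hx : ∀ i, 0 < x i)
    (j : κ) : 0 < (x ᵥ* Y)⁻¹ j :=
  inv_pos.2 (vecMul_pos hY hx j)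

/-- Subtracting `c = (m / M) (Y v)ᵢ / ∑ v ≤ m` from every entry of row `i` leaves non-negative
weights, against which `w ≤ b v` can be used; the subtracted part only sees `∑ w`. -/
lemma mulVec_apply_le {Y : Matrix κ ι ℝ} {m M b : ℝ} {v w : ι → ℝ} {i : κ} (hm : 0 < m)
    (hmY : ∀ j, m ≤ Y i j) (hYM : ∀ j, Y i j ≤ M) (hv : ∀ j, 0 < v j) (hwv : ∀ j, w j ≤ b * v j) :
    (Y *ᵥ w) i ≤ (m / M * ((∑ j, w j) / ∑ j, v j) + (1 - m / M) * b) * (Y *ᵥ v) i := by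
  have hM : 0 < M := hm.trans_le ((hmY (Classical.arbitrary ι)).trans (hYM _))
  have hS : 0 < ∑ j, v j := sum_pos (fun j _ => hv j) univ_nonempty
  set S := ∑ j, v j
  set W := (Y *ᵥ v) i
  set c := m / M * W / S
  have hWS : W ≤ M * S := by
    simp only [W, S, mulVec, dotProduct, mul_sum]
    exact sum_le_sum fun j _ => mul_le_mul_of_nonneg_right (hYM j) (hv j).le
  have hcm : c ≤ m := by
    rw [div_le_iff₀ hS, div_mul_eq_mul_div, div_le_iff₀ hM]
    nlinarith
  calc (Y *ᵥ w) i = ∑ j, (Y i j - c) * w j + c * ∑ j, w j := by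
        simp only [mulVec, dotProduct, mul_sum, ← sum_add_distrib]
        exact sum_congr rfl fun j _ => by ring
    _ ≤ ∑ j, (Y i j - c) * (b * v j) + c * ∑ j, w j := by
        gcongr with j
        · linarith [hmY j]
        · exact hwv j
    _ = b * (W - c * S) + c * ∑ j, w j := by
        simp only [W, S, mulVec, dotProduct, mul_sum, ← sum_sub_distrib]
        exact congrArg (· + _) (sum_congr rfl fun j _ => by ring)
    _ = (m / M * ((∑ j, w j) / S) + (1 - m / M) * b) * W := by
        simp only [c]
        field_simp
        ring

lemma le_mulVec_apply {Y : Matrix κ ι ℝ} {m M a : ℝ} {u v : ι → ℝ} {i : κ} (hm : 0 < m)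
    (hmY : ∀ j, m ≤ Y i j) (hYM : ∀ j, Y i j ≤ M) (hv : ∀ j, 0 < v j) (hvu : ∀ j, a * v j ≤ u j) :
    (m / M * ((∑ j, u j) / ∑ j, v j) + (1 - m / M) * a) * (Y *ᵥ v) i ≤ (Y *ᵥ u) i := by
  have h := mulVec_apply_le (w := -u) (b := -a) hm hmY hYM hv fun j => by
    simpa [neg_mul] using hvu j
  simp only [mulVec_neg, Pi.neg_apply, sum_neg_distrib, neg_div] at h
  linarith

variable [Fintype κ] [Nonempty κ]

/-- If `a v ≤ u ≤ b v`, the bounds of `mulVec_apply_le` pinch `Y u / Y v` into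
`[l μ + (1 - l) a, l μ + (1 - l) b]` with `l = m / M`, and `a ≤ l μ + (1 - l) a`. -/
theorem spread_mulVec_div_le {Y : Matrix κ ι ℝ} {m M : ℝ} {u v : ι → ℝ} (hm : 0 < m)
    (hmY : ∀ i j, m ≤ Y i j) (hYM : ∀ i j, Y i j ≤ M) (hu : ∀ j, 0 < u j) (hv : ∀ j, 0 < v j) :
    spread (Y *ᵥ u / Y *ᵥ v) ≤ (1 - m / M) * spread (u / v) := by
  have hr : ∀ j, 0 < (u / v) j := fun j => div_pos (hu j) (hv j)
  set a := univ.inf' univ_nonempty (u / v)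
  set b := univ.sup' univ_nonempty (u / v)
  set μ := (∑ j, u j) / ∑ j, v j
  set l := m / M
  obtain ⟨i₀⟩ := ‹Nonempty κ›
  obtain ⟨j₀⟩ := ‹Nonempty ι›
  have hmM : m ≤ M := (hmY i₀ j₀).trans (hYM i₀ j₀)
  have hM : 0 < M := hm.trans_le hmM
  have hl : 0 < l := div_pos hm hM
  have hl1 : l ≤ 1 := (div_le_one hM).2 hmM
  have ha : 0 < a := inf'_pos hr
  have hab : a ≤ b := (inf'_le _ (mem_univ j₀)).trans (le_sup' _ (mem_univ j₀))
  have hvu : ∀ j, a * v j ≤ u j := fun j =>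
    (le_div_iff₀ (hv j)).1 (inf'_le (u / v) (mem_univ j))
  have huv : ∀ j, u j ≤ b * v j := fun j =>
    (div_le_iff₀ (hv j)).1 (le_sup' (u / v) (mem_univ j))
  have haμ : a ≤ μ := by
    rw [le_div_iff₀ (sum_pos (fun j _ => hv j) univ_nonempty), mul_sum]
    exact sum_le_sum fun j _ => hvu j
  have hA : a ≤ l * μ + (1 - l) * a := by nlinarith
  have hYv : ∀ i, 0 < (Y *ᵥ v) i := mulVec_pos (fun i j => hm.trans_le (hmY i j)) hv
  calc spread (Y *ᵥ u / Y *ᵥ v)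
      ≤ (l * μ + (1 - l) * b) / (l * μ + (1 - l) * a) - 1 :=
        spread_le (ha.trans_le hA)
          (fun i => (le_div_iff₀ (hYv i)).2 (le_mulVec_apply hm (hmY i) (hYM i) hv hvu))
          (fun i => (div_le_iff₀ (hYv i)).2 (mulVec_apply_le hm (hmY i) (hYM i) hv huv))
    _ = (1 - l) * (b - a) / (l * μ + (1 - l) * a) := by
        rw [div_sub_one (ha.trans_le hA).ne']
        ring
    _ ≤ (1 - l) * (b - a) / a :=
        div_le_div_of_nonneg_left (by nlinarith) ha hA
    _ = (1 - l) * spread (u / v) := by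
        rw [spread, div_sub_one ha.ne']
        ring

end Contraction

section SinkhornStep

variable {ι : Type*} [Fintype ι]

/-- One Sinkhorn sweep read on row scalings: `(x ᵥ* Y)⁻¹` is the column scaling normalizing the
columns of `diagonal x * Y`, and `sinkhornStep Y x` the row scaling then normalizing the rows. -/
noncomputable def sinkhornStep (Y : Matrix ι ι ℝ) (x : ι → ℝ) : ι → ℝ :=
  (Y *ᵥ (x ᵥ* Y)⁻¹)⁻¹

variable [Nonempty ι] {Y : Matrix ι ι ℝ}

lemma sinkhornStep_pos (hY : ∀ i j, 0 < Y i j) {x : ι → ℝ} (hx : ∀ i, 0 < x i) (i : ι) :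
    0 < sinkhornStep Y x i :=
  inv_pos.2 (mulVec_pos hY (inv_vecMul_pos hY hx) i)

lemma iterate_sinkhornStep_pos (hY : ∀ i j, 0 < Y i j) {x : ι → ℝ} (hx : ∀ i, 0 < x i) (k : ℕ)
    (i : ι) : 0 < (sinkhornStep Y)^[k] x i := by
  induction k generalizing x with
  | zero => exact hx i
  | succ k ih => exact ih (sinkhornStep_pos hY hx)

theorem spread_sinkhornStep_div_le {m M : ℝ} (hm : 0 < m) (hmY : ∀ i j, m ≤ Y i j)
    (hYM : ∀ i j, Y i j ≤ M) {u v : ι → ℝ} (hu : ∀ i, 0 < u i) (hv : ∀ i, 0 < v i) :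
    spread (sinkhornStep Y u / sinkhornStep Y v) ≤ (1 - m / M) ^ 2 * spread (u / v) := by
  have hY : ∀ i j, 0 < Y i j := fun i j => hm.trans_le (hmY i j)
  obtain ⟨i₀⟩ := ‹Nonempty ι›
  have hmM : m ≤ M := (hmY i₀ i₀).trans (hYM i₀ i₀)
  have hl : 0 ≤ 1 - m / M := sub_nonneg.2 ((div_le_one (hm.trans_le hmM)).2 hmM)
  have hcol := spread_mulVec_div_le (Y := Yᵀ) hm (fun i j => hmY j i) (fun i j => hYM j i) hu hv
  rw [mulVec_transpose, mulVec_transpose] at hcol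
  rw [sinkhornStep, sinkhornStep, inv_div_inv]
  calc spread (Y *ᵥ (v ᵥ* Y)⁻¹ / Y *ᵥ (u ᵥ* Y)⁻¹)
      ≤ (1 - m / M) * spread ((v ᵥ* Y)⁻¹ / (u ᵥ* Y)⁻¹) :=
        spread_mulVec_div_le hm hmY hYM (inv_vecMul_pos hY hv) (inv_vecMul_pos hY hu)
    _ ≤ (1 - m / M) ^ 2 * spread (u / v) := by
        rw [inv_div_inv, sq, mul_assoc]
        exact mul_le_mul_of_nonneg_left hcol hl

lemma exists_sinkhornStep_contraction (hY : ∀ i j, 0 < Y i j) :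
    ∃ ρ, 0 ≤ ρ ∧ ρ < 1 ∧ ∀ u v : ι → ℝ, (∀ i, 0 < u i) → (∀ i, 0 < v i) →
      spread (sinkhornStep Y u / sinkhornStep Y v) ≤ ρ * spread (u / v) := by
  obtain ⟨p, hp⟩ := Finite.exists_min fun p : ι × ι => Y p.1 p.2
  obtain ⟨q, hq⟩ := Finite.exists_max fun p : ι × ι => Y p.1 p.2
  have hm := hY p.1 p.2
  have hM := hm.trans_le (hp q)
  refine ⟨(1 - Y p.1 p.2 / Y q.1 q.2) ^ 2, sq_nonneg _, ?_, fun u v hu hv =>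
    spread_sinkhornStep_div_le hm (fun i j => hp (i, j)) (fun i j => hq (i, j)) hu hv⟩
  have h0 : 0 < Y p.1 p.2 / Y q.1 q.2 := div_pos hm hM
  have h1 : Y p.1 p.2 / Y q.1 q.2 ≤ 1 := (div_le_one hM).2 (hp q)
  nlinarith

lemma sum_div_sinkhornStep (hY : ∀ i j, 0 < Y i j) {x : ι → ℝ} (hx : ∀ i, 0 < x i) :
    ∑ i, (x / sinkhornStep Y x) i = Fintype.card ι :=
  calc ∑ i, (x / sinkhornStep Y x) i = x ⬝ᵥ (Y *ᵥ (x ᵥ* Y)⁻¹) := by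
        simp only [sinkhornStep, Pi.div_apply, Pi.inv_apply, div_inv_eq_mul, dotProduct]
    _ = (x ᵥ* Y) ⬝ᵥ (x ᵥ* Y)⁻¹ := dotProduct_mulVec _ _ _
    _ = Fintype.card ι := by
        simp [dotProduct, mul_inv_cancel₀ (vecMul_pos hY hx _).ne']

lemma continuousAt_inv_vecMul (hY : ∀ i j, 0 < Y i j) {w : ι → ℝ} (hw : ∀ i, 0 < w i) :
    ContinuousAt (fun x : ι → ℝ => (x ᵥ* Y)⁻¹) w :=
  continuousAt_pi.2 fun j =>
    ((continuous_apply j).comp (continuous_id.matrix_vecMul continuous_const)).continuousAt.inv₀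
      (vecMul_pos hY hw j).ne'

lemma continuousAt_sinkhornStep (hY : ∀ i j, 0 < Y i j) {w : ι → ℝ} (hw : ∀ i, 0 < w i) :
    ContinuousAt (sinkhornStep Y) w :=
  continuousAt_pi.2 fun i =>
    (((continuous_apply i).comp (continuous_const.matrix_mulVec continuous_id)).continuousAt.comp
      (continuousAt_inv_vecMul hY hw)).inv₀ (mulVec_pos hY (inv_vecMul_pos hY hw) i).ne'

theorem exists_tendsto_iterate_sinkhornStep (hY : ∀ i j, 0 < Y i j) {x : ι → ℝ}
    (hx : ∀ i, 0 < x i) :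
    ∃ w, (∀ i, 0 < w i) ∧ Tendsto (fun k => (sinkhornStep Y)^[k] x) atTop (𝓝 w) := by
  obtain ⟨ρ, hρ0, hρ1, hρ⟩ := exists_sinkhornStep_contraction hY
  set u := fun k => (sinkhornStep Y)^[k] x
  have hu : ∀ k i, 0 < u k i := iterate_sinkhornStep_pos hY hx
  have hsucc : ∀ k, u (k + 1) = sinkhornStep Y (u k) := fun k =>
    iterate_succ_apply' _ _ _
  have hspread : ∀ k, spread (u k / u (k + 1)) ≤ ρ ^ k * spread (u 0 / u 1) := by
    intro k
    induction k with
    | zero => simp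
    | succ k ih =>
      calc spread (u (k + 1) / u (k + 2)) ≤ ρ * spread (u k / u (k + 1)) := by
            simpa only [← hsucc] using hρ _ _ (hu k) (hu (k + 1))
        _ ≤ ρ * (ρ ^ k * spread (u 0 / u 1)) := mul_le_mul_of_nonneg_left ih hρ0
        _ = ρ ^ (k + 1) * spread (u 0 / u 1) := by ring
  have hlog : ∀ i, CauchySeq fun k => Real.log (u k i) := fun i =>
    cauchySeq_of_le_geometric ρ _ hρ1 fun k => by
      rw [Real.dist_eq, ← Real.log_div (hu k i).ne' (hu (k + 1) i).ne', mul_comm]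
      refine le_trans ?_ (hspread k)
      rw [hsucc k]
      exact abs_log_le_spread (fun i => div_pos (hu k i) (sinkhornStep_pos hY (hu k) i))
        (sum_div_sinkhornStep hY (hu k)) i
  choose ℓ hℓ using fun i => cauchySeq_tendsto_of_complete (hlog i)
  refine ⟨fun i => Real.exp (ℓ i), fun i => Real.exp_pos _, tendsto_pi_nhds.2 fun i => ?_⟩
  simpa only [comp_def, Real.exp_log (hu _ i)] using
    (Real.continuous_exp.tendsto _).comp (hℓ i)

theorem exists_eq_smul_of_isFixedPt (hY : ∀ i j, 0 < Y i j) {e w : ι → ℝ} (he : ∀ i, 0 < e i)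
    (hw : ∀ i, 0 < w i) (hfe : IsFixedPt (sinkhornStep Y) e) (hfw : IsFixedPt (sinkhornStep Y) w) :
    ∃ t : ℝ, e = t • w := by
  obtain ⟨ρ, hρ0, hρ1, hρ⟩ := exists_sinkhornStep_contraction hY
  have hr : ∀ i, 0 < (e / w) i := fun i => div_pos (he i) (hw i)
  have h := hρ e w he hw
  rw [hfe.eq, hfw.eq] at h
  obtain ⟨t, ht⟩ := exists_eq_const_of_spread_nonpos hr (by nlinarith [spread_nonneg hr])
  refine ⟨t, funext fun i => ?_⟩
  rw [Pi.smul_apply, smul_eq_mul, ← ht i, Pi.div_apply, div_mul_cancel₀ _ (hw i).ne']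

end SinkhornStep

section DiagonalScaling

variable {ι κ : Type*} [Fintype ι] [DecidableEq ι] [Fintype κ] [DecidableEq κ]

lemma diagonal_mul_mul_diagonal_apply (Y : Matrix ι κ ℝ) (r : ι → ℝ) (c : κ → ℝ) (i : ι)
    (j : κ) : (diagonal r * Y * diagonal c) i j = r i * Y i j * c j := by
  simp only [mul_diagonal, diagonal_mul]

lemma sum_diagonal_mul_mul_diagonal_apply_row (Y : Matrix ι κ ℝ) (r : ι → ℝ) (c : κ → ℝ)
    (i : ι) : ∑ j, (diagonal r * Y * diagonal c) i j = r i * (Y *ᵥ c) i := by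
  simp only [diagonal_mul_mul_diagonal_apply, mulVec, dotProduct, mul_sum, mul_assoc]

lemma sum_diagonal_mul_mul_diagonal_apply_col (Y : Matrix ι κ ℝ) (r : ι → ℝ) (c : κ → ℝ)
    (j : κ) : ∑ i, (diagonal r * Y * diagonal c) i j = (r ᵥ* Y) j * c j := by
  simp only [diagonal_mul_mul_diagonal_apply, vecMul, dotProduct, sum_mul]

lemma diagonal_smul_mul_mul_diagonal_inv_vecMul (Y : Matrix ι κ ℝ) (w : ι → ℝ) {t : ℝ}
    (ht : t ≠ 0) :
    diagonal (t • w) * Y * diagonal ((t • w) ᵥ* Y)⁻¹ = diagonal w * Y * diagonal (w ᵥ* Y)⁻¹ := by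
  ext i j
  simp only [diagonal_mul_mul_diagonal_apply, smul_vecMul, Pi.smul_apply, Pi.inv_apply,
    smul_eq_mul, mul_inv]
  field_simp

end DiagonalScaling

section SinkhornSequence

variable {N : ℕ} {Y : Matrix (Fin N) (Fin N) ℝ}

lemma colNorm_diagonal_mul_mul_diagonal (r c : Fin N → ℝ) (hc : ∀ j, c j ≠ 0) :
    colNorm (diagonal r * Y * diagonal c) = diagonal r * Y * diagonal (r ᵥ* Y)⁻¹ := by
  ext i j
  rw [colNorm, of_apply, sum_diagonal_mul_mul_diagonal_apply_col, diagonal_mul_mul_diagonal_apply,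
    diagonal_mul_mul_diagonal_apply, mul_div_mul_right _ _ (hc j), Pi.inv_apply, div_eq_mul_inv]

lemma rowNorm_diagonal_mul_mul_diagonal (r c : Fin N → ℝ) (hr : ∀ i, r i ≠ 0) :
    rowNorm (diagonal r * Y * diagonal c) = diagonal (Y *ᵥ c)⁻¹ * Y * diagonal c := by
  ext i j
  rw [rowNorm, of_apply, sum_diagonal_mul_mul_diagonal_apply_row, diagonal_mul_mul_diagonal_apply,
    diagonal_mul_mul_diagonal_apply, mul_assoc, mul_div_mul_left _ _ (hr i), Pi.inv_apply,
    div_eq_inv_mul, mul_assoc]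

variable [Nonempty (Fin N)]

lemma sinkSeq_succ_eq (hY : ∀ i j, 0 < Y i j) (k : ℕ) :
    sinkSeq Y (k + 1) = diagonal ((sinkhornStep Y)^[(k + 1) / 2] 1) * Y *
      diagonal ((sinkhornStep Y)^[k / 2] 1 ᵥ* Y)⁻¹ := by
  have hc : ∀ n j, ((sinkhornStep Y)^[n] 1 ᵥ* Y)⁻¹ j ≠ 0 := fun n j =>
    (inv_vecMul_pos hY (iterate_sinkhornStep_pos hY (fun _ => one_pos) n) j).ne'
  have hr : ∀ n i, (sinkhornStep Y)^[n] 1 i ≠ 0 := fun n i =>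
    (iterate_sinkhornStep_pos hY (fun _ => one_pos) n i).ne'
  induction k with
  | zero =>
    simpa [sinkSeq] using colNorm_diagonal_mul_mul_diagonal (Y := Y) 1 1 fun _ => one_ne_zero
  | succ k ih =>
    rw [sinkSeq, ih]
    split_ifs with hk
    · rw [colNorm_diagonal_mul_mul_diagonal _ _ (hc _), show (k + 1 + 1) / 2 = (k + 1) / 2 by omega]
    · rw [rowNorm_diagonal_mul_mul_diagonal _ _ (hr _), show (k + 1 + 1) / 2 = k / 2 + 1 by omega,
        show (k + 1) / 2 = k / 2 by omega, iterate_succ_apply']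
      rfl

theorem tendsto_sinkSeq_apply (hY : ∀ i j, 0 < Y i j) {w : Fin N → ℝ} (hw : ∀ i, 0 < w i)
    (hlim : Tendsto (fun k => (sinkhornStep Y)^[k] 1) atTop (𝓝 w)) (i j : Fin N) :
    Tendsto (fun k => sinkSeq Y k i j) atTop
      (𝓝 ((diagonal w * Y * diagonal (w ᵥ* Y)⁻¹) i j)) := by
  have hhalf : Tendsto (fun k : ℕ => k / 2) atTop atTop := Nat.tendsto_div_const_atTop two_ne_zero
  have hrow := tendsto_pi_nhds.1 (hlim.comp (hhalf.comp (tendsto_add_atTop_nat 1))) i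
  have hcol := tendsto_pi_nhds.1 ((continuousAt_inv_vecMul hY hw).tendsto.comp (hlim.comp hhalf)) j
  rw [← tendsto_add_atTop_iff_nat 1]
  simp only [sinkSeq_succ_eq hY, diagonal_mul_mul_diagonal_apply]
  exact (hrow.mul_const _).mul hcol

end SinkhornSequence

section DoublyStochastic

variable {N : ℕ} {Y : Matrix (Fin N) (Fin N) ℝ}

lemma isDoublyStochastic_of_isFixedPt [Nonempty (Fin N)] (hY : ∀ i j, 0 < Y i j) {w : Fin N → ℝ}
    (hw : ∀ i, 0 < w i) (hfix : IsFixedPt (sinkhornStep Y) w) :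
    IsDoublyStochastic (diagonal w * Y * diagonal (w ᵥ* Y)⁻¹) := by
  refine ⟨fun i j => ?_, fun i => ?_, fun j => ?_⟩
  · rw [diagonal_mul_mul_diagonal_apply]
    exact (mul_pos (mul_pos (hw i) (hY i j)) (inv_vecMul_pos hY hw j)).le
  · rw [sum_diagonal_mul_mul_diagonal_apply_row]
    have hwi : ((Y *ᵥ (w ᵥ* Y)⁻¹) i)⁻¹ = w i := congrFun hfix.eq i
    rw [← hwi]
    exact inv_mul_cancel₀ (mulVec_pos hY (inv_vecMul_pos hY hw) i).ne'
  · rw [sum_diagonal_mul_mul_diagonal_apply_col, Pi.inv_apply]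
    exact mul_inv_cancel₀ (vecMul_pos hY hw j).ne'

lemma IsDoublyStochastic.eq_inv_vecMul {e₁ e₂ : Fin N → ℝ}
    (h : IsDoublyStochastic (diagonal e₁ * Y * diagonal e₂)) : e₂ = (e₁ ᵥ* Y)⁻¹ :=
  funext fun j => eq_inv_of_mul_eq_one_right <| by
    rw [← sum_diagonal_mul_mul_diagonal_apply_col]
    exact h.2.2 j

lemma IsDoublyStochastic.isFixedPt_sinkhornStep {e₁ e₂ : Fin N → ℝ}
    (h : IsDoublyStochastic (diagonal e₁ * Y * diagonal e₂)) :
    IsFixedPt (sinkhornStep Y) e₁ :=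
  funext fun i => by
    rw [sinkhornStep, ← h.eq_inv_vecMul, Pi.inv_apply]
    refine (eq_inv_of_mul_eq_one_left ?_).symm
    rw [← sum_diagonal_mul_mul_diagonal_apply_row]
    exact h.2.1 i

end DoublyStochastic

/-- Convergence part of Sinkhorn's theorem: alternately rescaling columns and rows
of an entrywise strictly positive matrix converges entrywise to the unique doubly
stochastic matrix of the form `D₁ * Y * D₂` with positive diagonal `D₁`, `D₂`. -/
theorem sinkhorn_iteration_converges (N : ℕ) (hN : 1 ≤ N)
    (Y : Matrix (Fin N) (Fin N) ℝ) (hY : ∀ i j, 0 < Y i j) :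
    ∃ d₁ d₂ : Fin N → ℝ, (∀ i, 0 < d₁ i) ∧ (∀ i, 0 < d₂ i) ∧
      IsDoublyStochastic (Matrix.diagonal d₁ * Y * Matrix.diagonal d₂) ∧
      (∀ e₁ e₂ : Fin N → ℝ, (∀ i, 0 < e₁ i) → (∀ i, 0 < e₂ i) →
        IsDoublyStochastic (Matrix.diagonal e₁ * Y * Matrix.diagonal e₂) →
        Matrix.diagonal e₁ * Y * Matrix.diagonal e₂ =
          Matrix.diagonal d₁ * Y * Matrix.diagonal d₂) ∧
      (∀ i j, Tendsto (fun k => sinkSeq Y k i j) atTop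
        (𝓝 ((Matrix.diagonal d₁ * Y * Matrix.diagonal d₂) i j))) := by
  have : Nonempty (Fin N) := Fin.pos_iff_nonempty.mp hN
  obtain ⟨w, hw, hlim⟩ := exists_tendsto_iterate_sinkhornStep hY fun _ => one_pos
  have hfix : IsFixedPt (sinkhornStep Y) w :=
    isFixedPt_of_tendsto_iterate hlim (continuousAt_sinkhornStep hY hw)
  refine ⟨w, (w ᵥ* Y)⁻¹, hw, inv_vecMul_pos hY hw, isDoublyStochastic_of_isFixedPt hY hw hfix,
    fun e₁ e₂ he₁ _ hDS => ?_, tendsto_sinkSeq_apply hY hw hlim⟩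
  obtain ⟨t, rfl⟩ := exists_eq_smul_of_isFixedPt hY he₁ hw hDS.isFixedPt_sinkhornStep hfix
  have ht : t ≠ 0 := by
    rintro rfl
    simpa using he₁ (Classical.arbitrary _)
  rw [hDS.eq_inv_vecMul, diagonal_smul_mul_mul_diagonal_inv_vecMul Y w ht]
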